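/- arXiv:math/0510509 — 2 statements merged into one kernel-verified Lean document; each statement's English description precedes it below -/
import Mathlib

section
/- Let X be a proper CAT(0) space, g a hyperbolic isometry of X, and x₀ ∈ Min(g). A geodesic ray ξ with ξ(0) = x₀ satisfies: ξ and g∘ξ are asymptotic if and only if the image of ξ is contained in Min(g). Consequently the fixed-point set of g acting on the boundary ∂X equals the boundary ∂Min(g) of the minimal set. -/
/-- A geodesic ray: an isometric embedding of `[0,∞)`. -/
def GeodesicRay {X : Type*} [MetricSpace X] (ξ : ℝ → X) : Prop :=
  ∀ s t : ℝ, 0 ≤ s → 0 ≤ t → dist (ξ s) (ξ t) = |s - t|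

/-- Two geodesic rays are asymptotic if they stay at bounded distance. -/
def Asymptotic {X : Type*} [MetricSpace X] (ξ ζ : ℝ → X) : Prop :=
  ∃ N : ℝ, ∀ t : ℝ, 0 ≤ t → dist (ξ t) (ζ t) ≤ N

/-- `γ` restricted to `[a,b]` is a geodesic. -/
def IsGeodesicOn {X : Type*} [MetricSpace X] (γ : ℝ → X) (a b : ℝ) : Prop :=
  ∀ s ∈ Set.Icc a b, ∀ t ∈ Set.Icc a b, dist (γ s) (γ t) = |s - t|

/-- A geodesic metric space: any two points are joined by a geodesic. -/
def GeodesicSpace (X : Type*) [MetricSpace X] : Prop :=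
  ∀ x y : X, ∃ γ : ℝ → X, γ 0 = x ∧ γ (dist x y) = y ∧ IsGeodesicOn γ 0 (dist x y)

/-- A CAT(0) space: a geodesic space satisfying the CN (Bruhat–Tits) inequality,
which is equivalent to the CAT(0) comparison-triangle inequality. -/
def CAT0 (X : Type*) [MetricSpace X] : Prop :=
  GeodesicSpace X ∧
  ∀ x y z m : X, dist y m = dist y z / 2 → dist z m = dist y z / 2 →
    dist x m ^ 2 ≤ (dist x y ^ 2 + dist x z ^ 2) / 2 - dist y z ^ 2 / 4

/-- The translation length of an isometry. -/
noncomputable def translationLength {X : Type*} [MetricSpace X] (g : X ≃ᵢ X) : ℝ :=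
  ⨅ x : X, dist x (g x)

/-- The minimal set of an isometry. -/
noncomputable def minSet {X : Type*} [MetricSpace X] (g : X ≃ᵢ X) : Set X :=
  {x | dist x (g x) = translationLength g}

/-- A hyperbolic isometry: nonempty minimal set and positive translation length. -/
def IsHyperbolic {X : Type*} [MetricSpace X] (g : X ≃ᵢ X) : Prop :=
  (minSet g).Nonempty ∧ 0 < translationLength g

/-- The set of geodesic rays in `X`. -/
def Ray (X : Type*) [MetricSpace X] := {ξ : ℝ → X // GeodesicRay ξ}

/-- Asymptoticity is an equivalence relation on geodesic rays. -/
def raySetoid (X : Type*) [MetricSpace X] : Setoid (Ray X) where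
  r ξ ζ := Asymptotic ξ.1 ζ.1
  iseqv := by
    refine ⟨fun ξ => ⟨0, fun t _ => by simp⟩, fun {ξ ζ} h => ?_, fun {a b c} h h' => ?_⟩
    · obtain ⟨N, hN⟩ := h
      exact ⟨N, fun t ht => by rw [dist_comm]; exact hN t ht⟩
    · obtain ⟨N, hN⟩ := h; obtain ⟨M, hM⟩ := h'
      exact ⟨N + M, fun t ht =>
        (dist_triangle _ (b.1 t) _).trans (add_le_add (hN t ht) (hM t ht))⟩

/-- The (visual) boundary of `X`: asymptotic classes of geodesic rays. -/
def Boundary (X : Type*) [MetricSpace X] := Quotient (raySetoid X)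

/-- The image of a geodesic ray under an isometry. -/
def rayMap {X : Type*} [MetricSpace X] (g : X ≃ᵢ X) (ξ : Ray X) : Ray X :=
  ⟨fun t => g (ξ.1 t), fun s t hs ht => by
    rw [IsometryEquiv.dist_eq]; exact ξ.2 s t hs ht⟩

/-- The induced map of an isometry on the boundary. -/
def boundaryMap {X : Type*} [MetricSpace X] (g : X ≃ᵢ X) : Boundary X → Boundary X :=
  @Quotient.map _ _ (raySetoid X) (raySetoid X) (rayMap g)
    (fun ξ ζ h => by
      obtain ⟨N, hN⟩ := h
      exact ⟨N, fun t ht => by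
        simpa [rayMap, IsometryEquiv.dist_eq] using hN t ht⟩)

/-- The boundary of a subset `A ⊆ X`: classes of geodesic rays with image in `A`. -/
def subBoundary {X : Type*} [MetricSpace X] (A : Set X) : Set (Boundary X) :=
  {α | ∃ ξ : Ray X, (∀ t : ℝ, 0 ≤ t → ξ.1 t ∈ A) ∧ Quotient.mk (raySetoid X) ξ = α}

/-!
In a CAT(0) space the distance between two geodesics is a convex function of time: the CN
inequality gives midpoint convexity, and the distance is continuous. For a ray `ξ` issuing from a
point of `Min(g)`, `t ↦ d(ξ t, g (ξ t))` is thus convex and starts at its minimum `|g|`; if `ξ` and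
`g ∘ ξ` are asymptotic it is bounded, hence nonincreasing, hence constantly `|g|`.

For the boundary statement, every class is represented by a ray from `x₀`: the geodesics from `x₀`
to `ξ n` stay within `d(x₀, ξ 0)` of `ξ`, and convexity from their common origin makes them
converge pointwise.
-/

open Set Filter Topology

section MidpointConvex

variable {φ : ℝ → ℝ} {a b : ℝ}

theorem le_max_of_midpoint_le (hφ : ContinuousOn φ (Icc a b))
    (hmid : ∀ x ∈ Icc a b, ∀ y ∈ Icc a b, φ ((x + y) / 2) ≤ (φ x + φ y) / 2) :
    ∀ t ∈ Icc a b, φ t ≤ max (φ a) (φ b) := by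
  intro t ht
  by_contra! hlt
  obtain ⟨c, hc, hmax⟩ := isCompact_Icc.exists_isMaxOn ⟨t, ht⟩ hφ
  -- The leftmost maximiser `t₀` is an interior point at which the midpoint inequality fails.
  set S := Icc a b ∩ φ ⁻¹' {φ c}
  have hS : IsClosed S := hφ.preimage_isClosed_of_isClosed isClosed_Icc isClosed_singleton
  have ht₀ : sInf S ∈ S := hS.csInf_mem ⟨c, hc, rfl⟩ ⟨a, fun x hx => hx.1.1⟩
  set t₀ := sInf S
  have hφt₀ : max (φ a) (φ b) < φ t₀ := hlt.trans_le (ht₀.2 ▸ hmax ht)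
  have hat₀ : a < t₀ := ht₀.1.1.lt_of_ne fun h => by
    rw [← h] at hφt₀; exact (le_max_left _ _).not_gt hφt₀
  have ht₀b : t₀ < b := ht₀.1.2.lt_of_ne fun h => by
    rw [h] at hφt₀; exact (le_max_right _ _).not_gt hφt₀
  set δ := min (t₀ - a) (b - t₀)
  have hδ : 0 < δ := lt_min (by linarith) (by linarith)
  have hleft : t₀ - δ ∈ Icc a b := ⟨by linarith [min_le_left (t₀ - a) (b - t₀)], by linarith⟩
  have hright : t₀ + δ ∈ Icc a b := ⟨by linarith, by linarith [min_le_right (t₀ - a) (b - t₀)]⟩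
  have hφleft : φ (t₀ - δ) < φ t₀ := by
    by_contra! hge
    have hmem : t₀ - δ ∈ S := ⟨hleft, le_antisymm (hmax hleft) (ht₀.2 ▸ hge)⟩
    linarith [csInf_le ⟨a, fun x hx => hx.1.1⟩ hmem]
  have hφright : φ (t₀ + δ) ≤ φ t₀ := ht₀.2 ▸ hmax hright
  have hmid₀ := hmid _ hleft _ hright
  rw [show (t₀ - δ + (t₀ + δ)) / 2 = t₀ by ring] at hmid₀
  linarith

theorem convexOn_Icc_of_midpoint_le (hφ : ContinuousOn φ (Icc a b))
    (hmid : ∀ x ∈ Icc a b, ∀ y ∈ Icc a b, φ ((x + y) / 2) ≤ (φ x + φ y) / 2) :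
    ConvexOn ℝ (Icc a b) φ := by
  refine LinearOrder.convexOn_of_lt (convex_Icc a b) fun x hx y hy hxy α β hα hβ hαβ => ?_
  obtain rfl : α = 1 - β := by linarith
  have hsub : Icc x y ⊆ Icc a b := Icc_subset_Icc hx.1 hy.2
  have hyx : y - x ≠ 0 := sub_ne_zero.2 hxy.ne'
  set chord : ℝ → ℝ := fun t => φ x + (t - x) / (y - x) * (φ y - φ x)
  have hchord_mid : ∀ s t, chord ((s + t) / 2) = (chord s + chord t) / 2 := fun s t => by
    simp only [chord]; ring
  have hmem : (1 - β) • x + β • y ∈ Icc x y := by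
    simp only [smul_eq_mul]; constructor <;> nlinarith
  have hbelow := le_max_of_midpoint_le (φ := fun t => φ t - chord t)
    ((hφ.mono hsub).sub (by fun_prop)) (fun s hs t ht => by
      linarith [hmid s (hsub hs) t (hsub ht), hchord_mid s t]) _ hmem
  have hchord : chord ((1 - β) • x + β • y) = (1 - β) • φ x + β • φ y := by
    simp only [chord, smul_eq_mul]
    rw [show (1 - β) * x + β * y - x = β * (y - x) by ring, mul_div_assoc, div_self hyx]
    ring
  have hchord_x : chord x = φ x := by simp [chord]
  have hchord_y : chord y = φ y := by simp [chord, div_self hyx]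
  rw [hchord_x, hchord_y, sub_self, sub_self, max_self, hchord] at hbelow
  exact sub_nonpos.1 hbelow

end MidpointConvex

theorem ConvexOn.antitoneOn_of_bddAbove {f : ℝ → ℝ} {a : ℝ} (hf : ConvexOn ℝ (Ici a) f)
    (hb : BddAbove (f '' Ici a)) : AntitoneOn f (Ici a) := by
  obtain ⟨N, hN⟩ := hb
  intro x hx y hy hxy
  by_contra! hlt
  have hxy' : x < y := hxy.lt_of_ne (by rintro rfl; exact hlt.false)
  -- A positive secant slope on `[x, y]` forces linear growth to the right of `y`.
  set s := (f y - f x) / (y - x)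
  have hs : 0 < s := div_pos (by linarith) (by linarith)
  have hfy : f y ≤ N := hN ⟨y, hy, rfl⟩
  set z := y + (N - f y) / s + 1
  have hyz : y < z := by have := div_nonneg (sub_nonneg.2 hfy) hs.le; linarith
  have hslope := hf.slope_mono_adjacent hx (hy.trans hyz.le) hxy' hyz
  rw [le_div_iff₀ (by linarith)] at hslope
  have hz : z - y = (N - f y) / s + 1 := by ring
  rw [hz, mul_add, mul_div_cancel₀ _ hs.ne', mul_one] at hslope
  linarith [hN ⟨z, hy.trans hyz.le, rfl⟩]

section Geodesic

variable {X : Type*} [MetricSpace X] {γ : ℝ → X} {a b : ℝ}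

theorem translationLength_le_dist (g : X ≃ᵢ X) (x : X) : translationLength g ≤ dist x (g x) :=
  ciInf_le ⟨0, by rintro _ ⟨y, rfl⟩; exact dist_nonneg⟩ x

theorem GeodesicRay.isGeodesicOn {ξ : ℝ → X} (hξ : GeodesicRay ξ) (T : ℝ) : IsGeodesicOn ξ 0 T :=
  fun s hs t ht => hξ s t hs.1 ht.1

theorem GeodesicRay.map {ξ : ℝ → X} (hξ : GeodesicRay ξ) (g : X ≃ᵢ X) :
    GeodesicRay fun t => g (ξ t) :=
  (rayMap g ⟨ξ, hξ⟩).2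

theorem IsGeodesicOn.mono (hγ : IsGeodesicOn γ a b) {c d : ℝ} (hac : a ≤ c) (hdb : d ≤ b) :
    IsGeodesicOn γ c d :=
  fun s hs t ht => hγ s ⟨hac.trans hs.1, hs.2.trans hdb⟩ t ⟨hac.trans ht.1, ht.2.trans hdb⟩

theorem IsGeodesicOn.continuousOn (hγ : IsGeodesicOn γ a b) : ContinuousOn γ (Icc a b) :=
  (LipschitzOnWith.of_dist_le' (K := 1) fun s hs t ht => by
    rw [hγ s hs t ht, one_mul, Real.dist_eq]).continuousOn

theorem IsGeodesicOn.dist_midpoint (hγ : IsGeodesicOn γ a b) (hab : a ≤ b) :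
    dist (γ a) (γ ((a + b) / 2)) = dist (γ a) (γ b) / 2 ∧
      dist (γ b) (γ ((a + b) / 2)) = dist (γ a) (γ b) / 2 := by
  have ha : a ∈ Icc a b := left_mem_Icc.2 hab
  have hb : b ∈ Icc a b := right_mem_Icc.2 hab
  have hm : (a + b) / 2 ∈ Icc a b := ⟨by linarith, by linarith⟩
  rw [hγ a ha _ hm, hγ b hb _ hm, hγ a ha b hb, abs_of_nonpos (by linarith : a - b ≤ 0),
    abs_of_nonpos (by linarith : a - (a + b) / 2 ≤ 0),
    abs_of_nonneg (by linarith : 0 ≤ b - (a + b) / 2)]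
  constructor <;> ring

end Geodesic

namespace CAT0

variable {X : Type*} [MetricSpace X] {γ σ : ℝ → X} {a b : ℝ}

theorem exists_midpoint (hX : CAT0 X) (x y : X) :
    ∃ m : X, dist x m = dist x y / 2 ∧ dist y m = dist x y / 2 := by
  obtain ⟨γ, hγ₀, hγ₁, hγ⟩ := hX.1 x y
  have := hγ.dist_midpoint dist_nonneg
  rw [hγ₀, hγ₁, zero_add] at this
  exact ⟨_, this⟩

theorem dist_midpoints_le (hX : CAT0 X) {x y z m₁ m₂ : X}
    (hxm₁ : dist x m₁ = dist x y / 2) (hym₁ : dist y m₁ = dist x y / 2)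
    (hxm₂ : dist x m₂ = dist x z / 2) (hzm₂ : dist z m₂ = dist x z / 2) :
    dist m₁ m₂ ≤ dist y z / 2 := by
  have h₁ := hX.2 m₁ x z m₂ hxm₂ hzm₂
  have h₂ := hX.2 z x y m₁ hxm₁ hym₁
  rw [dist_comm m₁ x, hxm₁, dist_comm m₁ z] at h₁
  rw [dist_comm z x, dist_comm z y] at h₂
  have hsq : dist m₁ m₂ ^ 2 ≤ (dist y z / 2) ^ 2 := by nlinarith
  exact (pow_le_pow_iff_left₀ dist_nonneg (by positivity) two_ne_zero).1 hsq

theorem dist_midpoint_le (hX : CAT0 X) (hγ : IsGeodesicOn γ a b) (hσ : IsGeodesicOn σ a b)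
    (hab : a ≤ b) :
    dist (γ ((a + b) / 2)) (σ ((a + b) / 2)) ≤ (dist (γ a) (σ a) + dist (γ b) (σ b)) / 2 := by
  obtain ⟨hγa, hγb⟩ := hγ.dist_midpoint hab
  obtain ⟨hσa, hσb⟩ := hσ.dist_midpoint hab
  obtain ⟨m, hm₁, hm₂⟩ := hX.exists_midpoint (γ a) (σ b)
  -- Compare both midpoints with the midpoint `m` of the diagonal `[γ a, σ b]`.
  have hγm : dist (γ ((a + b) / 2)) m ≤ dist (γ b) (σ b) / 2 :=
    hX.dist_midpoints_le hγa hγb hm₁ hm₂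
  rw [dist_comm (γ a) (σ b)] at hm₁ hm₂
  rw [dist_comm (σ a) (σ b)] at hσa hσb
  have hσm : dist (σ ((a + b) / 2)) m ≤ dist (σ a) (γ a) / 2 :=
    hX.dist_midpoints_le hσb hσa hm₂ hm₁
  linarith [dist_triangle_right (γ ((a + b) / 2)) (σ ((a + b) / 2)) m, dist_comm (σ a) (γ a)]

theorem convexOn_dist (hX : CAT0 X) (hγ : IsGeodesicOn γ a b) (hσ : IsGeodesicOn σ a b) :
    ConvexOn ℝ (Icc a b) fun t => dist (γ t) (σ t) := by
  refine convexOn_Icc_of_midpoint_le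
    (continuous_dist.comp_continuousOn (hγ.continuousOn.prodMk hσ.continuousOn))
    fun s hs t ht => ?_
  rcases le_total s t with hst | hts
  · exact hX.dist_midpoint_le (hγ.mono hs.1 ht.2) (hσ.mono hs.1 ht.2) hst
  · rw [add_comm s t, add_comm (dist (γ s) (σ s))]
    exact hX.dist_midpoint_le (hγ.mono ht.1 hs.2) (hσ.mono ht.1 hs.2) hts

theorem convexOn_dist_rays (hX : CAT0 X) (hγ : GeodesicRay γ) (hσ : GeodesicRay σ) :
    ConvexOn ℝ (Ici 0) fun t => dist (γ t) (σ t) :=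
  ⟨convex_Ici 0, fun x hx y hy _ _ hα hβ hαβ =>
    (hX.convexOn_dist (hγ.isGeodesicOn (max x y)) (hσ.isGeodesicOn (max x y))).2
      ⟨hx, le_max_left x y⟩ ⟨hy, le_max_right x y⟩ hα hβ hαβ⟩

theorem dist_le_div_mul_of_eq (hX : CAT0 X) (hγ : IsGeodesicOn γ 0 b) (hσ : IsGeodesicOn σ 0 b)
    (h₀ : γ 0 = σ 0) {t : ℝ} (ht : t ∈ Icc 0 b) :
    dist (γ t) (σ t) ≤ t / b * dist (γ b) (σ b) := by
  rcases ht.1.eq_or_lt with rfl | htpos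
  · simp [h₀]
  have hb : 0 < b := htpos.trans_le ht.2
  have hconv := (hX.convexOn_dist hγ hσ).2 (left_mem_Icc.2 hb.le) (right_mem_Icc.2 hb.le)
    (sub_nonneg.2 (div_le_one_of_le₀ ht.2 hb.le)) (div_nonneg ht.1 hb.le) (sub_add_cancel 1 (t / b))
  simp only [smul_eq_mul, mul_zero, zero_add, h₀, dist_self] at hconv
  rwa [div_mul_cancel₀ t hb.ne'] at hconv

theorem mem_minSet_of_asymptotic (hX : CAT0 X) (g : X ≃ᵢ X) {ξ : ℝ → X} (hξ : GeodesicRay ξ)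
    (h₀ : ξ 0 ∈ minSet g) (h : Asymptotic ξ fun t => g (ξ t)) {t : ℝ} (ht : 0 ≤ t) :
    ξ t ∈ minSet g := by
  obtain ⟨N, hN⟩ := h
  have hanti := (hX.convexOn_dist_rays hξ (hξ.map g)).antitoneOn_of_bddAbove
    ⟨N, by rintro _ ⟨s, hs, rfl⟩; exact hN s hs⟩
  exact le_antisymm (h₀ ▸ hanti self_mem_Ici ht ht) (translationLength_le_dist g _)

theorem cauchySeq_of_dist_le (hX : CAT0 X) {γ : ℕ → ℝ → X} {d : ℕ → ℝ} {K : ℝ}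
    (hγ : ∀ n, IsGeodesicOn (γ n) 0 (d n)) (h₀ : ∀ n m, γ n 0 = γ m 0)
    (hd : Tendsto d atTop atTop)
    (hK : ∀ n m, dist (γ n (min (d n) (d m))) (γ m (min (d n) (d m))) ≤ K)
    {t : ℝ} (ht : 0 ≤ t) : CauchySeq fun n => γ n t := by
  refine cauchySeq_iff_tendsto_dist_atTop_0.2 ?_
  rw [← prod_atTop_atTop_eq]
  have hmin : Tendsto (fun p : ℕ × ℕ => min (d p.1) (d p.2)) (atTop ×ˢ atTop) atTop :=
    tendsto_atTop.2 fun r => ((hd.eventually_ge_atTop r).prod_mk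
      (hd.eventually_ge_atTop r)).mono fun p hp => le_min hp.1 hp.2
  have hbound : Tendsto (fun p : ℕ × ℕ => t / min (d p.1) (d p.2) * K) (atTop ×ˢ atTop) (𝓝 0) := by
    simpa using (tendsto_const_nhds.div_atTop hmin).mul_const K
  refine squeeze_zero' (Eventually.of_forall fun _ => dist_nonneg) ?_ hbound
  filter_upwards [(hd.eventually_ge_atTop t).prod_mk (hd.eventually_ge_atTop t)]
    with ⟨n, m⟩ ⟨hn, hm⟩
  calc dist (γ n t) (γ m t)
      ≤ t / min (d n) (d m) * dist (γ n (min (d n) (d m))) (γ m (min (d n) (d m))) :=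
        hX.dist_le_div_mul_of_eq ((hγ n).mono le_rfl (min_le_left _ _))
          ((hγ m).mono le_rfl (min_le_right _ _)) (h₀ n m) ⟨ht, le_min hn hm⟩
    _ ≤ t / min (d n) (d m) * K := by
        have : 0 ≤ min (d n) (d m) := ht.trans (le_min hn hm)
        gcongr
        exact hK n m

end CAT0

theorem GeodesicRay.of_tendsto {X : Type*} [MetricSpace X] {γ : ℕ → ℝ → X} {d : ℕ → ℝ}
    {ζ : ℝ → X} (hγ : ∀ n, IsGeodesicOn (γ n) 0 (d n)) (hd : Tendsto d atTop atTop)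
    (hζ : ∀ t, 0 ≤ t → Tendsto (fun n => γ n t) atTop (𝓝 (ζ t))) : GeodesicRay ζ := by
  intro s t hs ht
  refine tendsto_nhds_unique ((hζ s hs).dist (hζ t ht)) (tendsto_const_nhds.congr' ?_)
  filter_upwards [hd.eventually_ge_atTop (max s t)] with n hn
  exact (hγ n s ⟨hs, (le_max_left s t).trans hn⟩ t ⟨ht, (le_max_right s t).trans hn⟩).symm

theorem CAT0.exists_asymptotic_ray {X : Type*} [MetricSpace X] [CompleteSpace X] (hX : CAT0 X)
    {ξ : ℝ → X} (hξ : GeodesicRay ξ) (x₀ : X) :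
    ∃ ζ : ℝ → X, GeodesicRay ζ ∧ ζ 0 = x₀ ∧ Asymptotic ζ ξ := by
  have : Nonempty X := ⟨x₀⟩
  choose γ hγ₀ hγ₁ hγ using fun n : ℕ => hX.1 x₀ (ξ n)
  set C := dist x₀ (ξ 0)
  set d : ℕ → ℝ := fun n => dist x₀ (ξ n)
  have hdn : ∀ n : ℕ, |(n : ℝ) - d n| ≤ C := fun n => by
    have h := hξ 0 n le_rfl n.cast_nonneg
    rw [zero_sub, abs_neg, Nat.abs_cast] at h
    rw [abs_sub_le_iff]
    constructor <;> linarith [dist_triangle (ξ 0) x₀ (ξ n), dist_triangle x₀ (ξ 0) (ξ n),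
      dist_comm x₀ (ξ 0)]
  have hd : Tendsto d atTop atTop :=
    tendsto_atTop_mono (fun n => by linarith [(abs_sub_le_iff.1 (hdn n)).1])
      (tendsto_atTop_add_const_right atTop (-C) tendsto_natCast_atTop_atTop)
  -- The distance from `γ n` to `ξ` is convex, equal to `C` at time `0` and at most `C` at `d n`.
  have hclose : ∀ n, ∀ t ∈ Icc 0 (d n), dist (γ n t) (ξ t) ≤ C := fun n t ht => by
    refine ((hX.convexOn_dist (hγ n) (hξ.isGeodesicOn _)).le_max_of_mem_Icc
      (left_mem_Icc.2 (ht.1.trans ht.2)) (right_mem_Icc.2 (ht.1.trans ht.2)) ht).trans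
      (max_le (by rw [hγ₀]) ?_)
    rw [hγ₁, hξ _ _ n.cast_nonneg dist_nonneg]
    exact hdn n
  have hK : ∀ n m, dist (γ n (min (d n) (d m))) (γ m (min (d n) (d m))) ≤ 2 * C := fun n m => by
    have hb : 0 ≤ min (d n) (d m) := le_min dist_nonneg dist_nonneg
    linarith [dist_triangle_right (γ n (min (d n) (d m))) (γ m (min (d n) (d m)))
      (ξ (min (d n) (d m))), hclose n _ ⟨hb, min_le_left _ _⟩, hclose m _ ⟨hb, min_le_right _ _⟩]
  have hlim : ∀ t, 0 ≤ t → Tendsto (fun n => γ n t) atTop (𝓝 (limUnder atTop fun n => γ n t)) :=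
    fun t ht => (hX.cauchySeq_of_dist_le hγ (fun n m => (hγ₀ n).trans (hγ₀ m).symm) hd hK
      ht).tendsto_limUnder
  refine ⟨_, GeodesicRay.of_tendsto hγ hd hlim, ?_, C, fun t ht => ?_⟩
  · exact tendsto_nhds_unique (hlim 0 le_rfl) (by simp only [hγ₀]; exact tendsto_const_nhds)
  · refine le_of_tendsto ((hlim t ht).dist tendsto_const_nhds) ?_
    filter_upwards [hd.eventually_ge_atTop t] with n hn using hclose n t ⟨ht, hn⟩


theorem asymptotic_of_forall_mem_minSet {X : Type*} [MetricSpace X] (g : X ≃ᵢ X) {ξ : ℝ → X}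
    (h : ∀ t : ℝ, 0 ≤ t → ξ t ∈ minSet g) : Asymptotic ξ fun t => g (ξ t) :=
  ⟨translationLength g, fun t ht => (h t ht).le⟩

theorem boundaryMap_mk_eq_self_iff {X : Type*} [MetricSpace X] (g : X ≃ᵢ X) (ξ : Ray X) :
    boundaryMap g (Quotient.mk (raySetoid X) ξ) = Quotient.mk (raySetoid X) ξ ↔
      Asymptotic ξ.1 fun t => g (ξ.1 t) :=
  ⟨fun h => (raySetoid X).iseqv.symm (Quotient.exact h),
    fun h => Quotient.sound ((raySetoid X).iseqv.symm h)⟩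

theorem fixedSet_eq_boundary_minSet_general {X : Type*} [MetricSpace X] [ProperSpace X]
    (hX : CAT0 X) (g : X ≃ᵢ X)
    (x₀ : X) (hx₀ : x₀ ∈ minSet g) :
    (∀ ξ : Ray X, ξ.1 0 = x₀ →
      (Asymptotic ξ.1 (fun t => g (ξ.1 t)) ↔ ∀ t : ℝ, 0 ≤ t → ξ.1 t ∈ minSet g)) ∧
    {α : Boundary X | boundaryMap g α = α} = subBoundary (minSet g) := by
  have hray : ∀ ξ : Ray X, ξ.1 0 = x₀ →
      (Asymptotic ξ.1 (fun t => g (ξ.1 t)) ↔ ∀ t : ℝ, 0 ≤ t → ξ.1 t ∈ minSet g) :=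
    fun ξ h₀ => ⟨fun h _ ht => hX.mem_minSet_of_asymptotic g ξ.2 (h₀ ▸ hx₀) h ht,
      asymptotic_of_forall_mem_minSet g⟩
  refine ⟨hray, Set.ext fun α => ?_⟩
  obtain ⟨ξ, rfl⟩ := Quotient.exists_rep α
  change boundaryMap g (Quotient.mk _ ξ) = Quotient.mk _ ξ ↔ _
  rw [boundaryMap_mk_eq_self_iff]
  constructor
  · intro hfix
    obtain ⟨ζ, hζ, hζ₀, hζξ⟩ := hX.exists_asymptotic_ray ξ.2 x₀
    have hclass : Quotient.mk (raySetoid X) ⟨ζ, hζ⟩ = Quotient.mk _ ξ := Quotient.sound hζξ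
    refine ⟨⟨ζ, hζ⟩, (hray ⟨ζ, hζ⟩ hζ₀).1 ((boundaryMap_mk_eq_self_iff g _).1 ?_), hclass⟩
    rwa [hclass, boundaryMap_mk_eq_self_iff]
  · rintro ⟨ζ, hζ, hclass⟩
    rw [← boundaryMap_mk_eq_self_iff, ← hclass]
    exact (boundaryMap_mk_eq_self_iff g ζ).2 (asymptotic_of_forall_mem_minSet g hζ)

/-- For a hyperbolic isometry `g` of a proper CAT(0) space and
`x₀ ∈ Min(g)`: a ray `ξ` from `x₀` is asymptotic to `g ∘ ξ` iff its image lies in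
`Min(g)`; consequently the fixed-point set of `g` in `∂X` equals `∂Min(g)`. -/
theorem fixedSet_eq_boundary_minSet {X : Type*} [MetricSpace X] [ProperSpace X]
    (hX : CAT0 X) (g : X ≃ᵢ X) (hg : IsHyperbolic g)
    (x₀ : X) (hx₀ : x₀ ∈ minSet g) :
    (∀ ξ : Ray X, ξ.1 0 = x₀ →
      (Asymptotic ξ.1 (fun t => g (ξ.1 t)) ↔ ∀ t : ℝ, 0 ≤ t → ξ.1 t ∈ minSet g)) ∧
    {α : Boundary X | boundaryMap g α = α} = subBoundary (minSet g) :=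
  fixedSet_eq_boundary_minSet_general hX g x₀ hx₀
end

section
/- Let a group G act on a proper metric space X by isometries, properly and cocompactly. Fix x₀ ∈ X and let g ∈ G. Suppose ξ : [0,∞) → X is a geodesic ray with ξ(0) = x₀ such that d(ξ(t), gξ(t)) ≤ M for all t ≥ 0. Then there exist elements w_j ∈ Z_g = {v ∈ G : gv = vg} (for j ∈ ℕ) and an unbounded sequence t_j → ∞ with d(ξ(t_j), w_j x₀) uniformly bounded. -/
section GroupAction

variable {G : Type*} {X : Type*} [Group G] [MetricSpace X] [MulAction G X] [IsIsometricSMul G X]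

/-- The image of a geodesic ray under the action of a group element. -/
def smulRay (g : G) (ξ : Ray X) : Ray X :=
  ⟨fun t => g • ξ.1 t, fun s t hs ht => by rw [dist_smul]; exact ξ.2 s t hs ht⟩

/-- The induced action of a group element on the boundary. -/
def boundarySMul (g : G) : Boundary X → Boundary X :=
  @Quotient.map _ _ (raySetoid X) (raySetoid X) (smulRay g)
    (fun ξ ζ h => by
      obtain ⟨N, hN⟩ := h
      exact ⟨N, fun t ht => by simpa [smulRay, dist_smul] using hN t ht⟩)

/-- Convergence of a sequence of points of `X` to the boundary point of the ray `ξ`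
issuing from `x₀`, in the cone topology: eventually the points leave every ball around
`x₀` and the geodesics from `x₀` to them fellow-travel `ξ`. -/
def ConvergesTo (x₀ : X) (x : ℕ → X) (ξ : Ray X) : Prop :=
  ∀ r > (0:ℝ), ∀ ε > (0:ℝ), ∃ n₀ : ℕ, ∀ n ≥ n₀,
    r < dist x₀ (x n) ∧
    ∀ γ : ℝ → X, IsGeodesicOn γ 0 (dist x₀ (x n)) → γ 0 = x₀ → γ (dist x₀ (x n)) = x n →
      dist (ξ.1 r) (γ r) < ε

/-- The limit set of a subset `A ⊆ G`: boundary points which are limits of orbit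
sequences `vᵢ • x₀` with `vᵢ ∈ A`. -/
def LimitSet (A : Set G) (x₀ : X) : Set (Boundary X) :=
  {α | ∃ ξ : Ray X, ξ.1 0 = x₀ ∧ Quotient.mk (raySetoid X) ξ = α ∧
    ∃ v : ℕ → G, (∀ i, v i ∈ A) ∧ ConvergesTo x₀ (fun i => v i • x₀) ξ}

/-- A (metrically) proper action: orbit balls contain only finitely many orbit points. -/
def ProperAction (G : Type*) (X : Type*) [Group G] [MetricSpace X] [MulAction G X] : Prop :=
  ∀ x₀ : X, ∀ r : ℝ, {h : G | dist x₀ (h • x₀) ≤ r}.Finite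

/-- A cocompact action: some orbit is coarsely dense. -/
def CocompactAction (G : Type*) (X : Type*) [Group G] [MetricSpace X] [MulAction G X] : Prop :=
  ∀ x₀ : X, ∃ N > (0:ℝ), ∀ x : X, ∃ v : G, dist (v • x₀) x ≤ N

/-- The centralizer of `g` in `G`. -/
def Zg {G : Type*} [Group G] (g : G) : Set G := {v : G | g * v = v * g}

end GroupAction

/- Choose orbit points `vᵢ • x₀` within `N` of `ξ i`. Each conjugate `vᵢ⁻¹ g vᵢ`
then moves `x₀` by at most `2N + M`, so by properness one conjugate occurs for infinitely
many `i`; any two such `vᵢ` differ by an element of the centralizer of `g`. -/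

theorem Set.Finite.exists_strictMono_const_of_forall_mem {α : Type*} {s : Set α}
    (hs : s.Finite) {f : ℕ → α} (hf : ∀ n, f n ∈ s) :
    ∃ a, ∃ φ : ℕ → ℕ, StrictMono φ ∧ ∀ n, f (φ n) = a := by
  have hfreq : ∃ᶠ n in Filter.atTop, ∃ a ∈ s, f n = a :=
    Filter.Eventually.frequently (Filter.Eventually.of_forall fun n => ⟨f n, hf n, rfl⟩)
  obtain ⟨a, -, ha⟩ := hs.frequently_exists.mp hfreq
  obtain ⟨φ, hφ, hφa⟩ := Filter.extraction_of_frequently_atTop ha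
  exact ⟨a, φ, hφ, hφa⟩

theorem mul_inv_mem_Zg_of_conj_eq {G : Type*} [Group G] {g u v : G}
    (h : v⁻¹ * g * v = u⁻¹ * g * u) : v * u⁻¹ ∈ Zg g :=
  calc g * (v * u⁻¹) = v * (v⁻¹ * g * v) * u⁻¹ := by group
    _ = v * (u⁻¹ * g * u) * u⁻¹ := by rw [h]
    _ = v * u⁻¹ * g := by group

section IsometricAction

variable {G X : Type*} [Group G] [MetricSpace X] [MulAction G X] [IsIsometricSMul G X]

theorem dist_conj_smul_le (g v : G) (x y : X) :
    dist x ((v⁻¹ * g * v) • x) ≤ 2 * dist (v • x) y + dist y (g • y) := by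
  have hconj : dist x ((v⁻¹ * g * v) • x) = dist (v • x) (g • v • x) := by
    rw [← dist_smul v, smul_smul, smul_smul]
    congr 2
    group
  have hback : dist (g • y) (g • v • x) = dist (v • x) y := by
    rw [dist_smul, dist_comm]
  calc dist x ((v⁻¹ * g * v) • x)
      ≤ dist (v • x) y + dist y (g • y) + dist (g • y) (g • v • x) := by
        rw [hconj]; exact dist_triangle4 _ _ _ _
    _ = 2 * dist (v • x) y + dist y (g • y) := by rw [hback]; ring

theorem dist_mul_smul_le (v w : G) (x y : X) :
    dist y ((v * w) • x) ≤ dist y (v • x) + dist x (w • x) := by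
  calc dist y ((v * w) • x) ≤ dist y (v • x) + dist (v • x) (v • w • x) := by
        rw [mul_smul]; exact dist_triangle _ _ _
    _ = dist y (v • x) + dist x (w • x) := by rw [dist_smul]

end IsometricAction

theorem centralizer_elements_along_ray_general {G X : Type*} [Group G] [MetricSpace X]
    [MulAction G X] [IsIsometricSMul G X]
    (hproper : ProperAction G X) (hcocompact : CocompactAction G X)
    (x₀ : X) (g : G) (ξ : ℝ → X)
    (M : ℝ) (hM : ∀ t : ℝ, 0 ≤ t → dist (ξ t) (g • ξ t) ≤ M) :
    ∃ C : ℝ, ∃ w : ℕ → G, ∃ ts : ℕ → ℝ,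
      (∀ j, w j ∈ Zg g) ∧
      Filter.Tendsto ts Filter.atTop Filter.atTop ∧
      (∀ j, dist (ξ (ts j)) (w j • x₀) ≤ C) := by
  obtain ⟨N, -, hN⟩ := hcocompact x₀
  choose v hv using fun i : ℕ => hN (ξ i)
  have hconj : ∀ i : ℕ, (v i)⁻¹ * g * v i ∈ {h : G | dist x₀ (h • x₀) ≤ 2 * N + M} :=
    fun i => (dist_conj_smul_le g (v i) x₀ (ξ i)).trans <| by
      linarith [hv i, hM i i.cast_nonneg]
  obtain ⟨a, φ, hφ, hφa⟩ := (hproper x₀ _).exists_strictMono_const_of_forall_mem hconj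
  refine ⟨N + dist x₀ ((v (φ 0))⁻¹ • x₀), fun j => v (φ j) * (v (φ 0))⁻¹, fun j => φ j,
    fun j => mul_inv_mem_Zg_of_conj_eq ((hφa j).trans (hφa 0).symm),
    tendsto_natCast_atTop_atTop.comp hφ.tendsto_atTop, fun j => ?_⟩
  calc dist (ξ (φ j)) ((v (φ j) * (v (φ 0))⁻¹) • x₀)
      ≤ dist (ξ (φ j)) (v (φ j) • x₀) + dist x₀ ((v (φ 0))⁻¹ • x₀) := dist_mul_smul_le _ _ _ _
    _ ≤ N + dist x₀ ((v (φ 0))⁻¹ • x₀) := by grw [dist_comm, hv]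

/-- For a proper cocompact isometric action of `G` on a proper metric
space `X`, if along a geodesic ray `ξ` from `x₀` the displacement by `g` is bounded by `M`,
then there are centralizer elements `w j ∈ Z_g` and times `t j → ∞`
with `d(ξ (t j), w j • x₀)` uniformly bounded. -/
theorem centralizer_elements_along_ray {G X : Type*} [Group G] [MetricSpace X] [ProperSpace X]
    [MulAction G X] [IsIsometricSMul G X]
    (hproper : ProperAction G X) (hcocompact : CocompactAction G X)
    (x₀ : X) (g : G) (ξ : ℝ → X) (hξ : GeodesicRay ξ) (h0 : ξ 0 = x₀)
    (M : ℝ) (hM : ∀ t : ℝ, 0 ≤ t → dist (ξ t) (g • ξ t) ≤ M) :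
    ∃ C : ℝ, ∃ w : ℕ → G, ∃ ts : ℕ → ℝ,
      (∀ j, w j ∈ Zg g) ∧
      Filter.Tendsto ts Filter.atTop Filter.atTop ∧
      (∀ j, dist (ξ (ts j)) (w j • x₀) ≤ C) :=
  centralizer_elements_along_ray_general hproper hcocompact x₀ g ξ M hM
end
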